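/- Let n ≥ 4 and let μ be a positive integer with μ mod 27 = 17. Define f : ZMod(3^n) → ZMod(3^n) by f(x) = μ·x·(x+1). Then the maximum over all x₀ ∈ ZMod(3^n) of the minimal period of x₀ under f equals 2·3^{n−4}. -/

import Mathlib

/-!
Write `f = logistic μ` and note `μ ≡ -1 (mod 3)`. Since `f a - f b = (a - b) μ (a + b + 1)`, the
map contracts the class `1 + 3ℤ` 3-adically, so its periodic points there are fixed, while the
class `2 + 3ℤ` is sent into `3ℤ`. On `3ℤ` the map `g = f ∘ f` has derivative `≡ 1 (mod 3)`, and a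
Taylor expansion shows: if `M ∣ g^[k] z - z`, then `g^[3k] z - z ≡ s (g^[k] z - z) (mod 3M)` with
`3 ∣ s`, so tripling the number of steps gains a factor 3. Starting from
`g z ≡ z (mod 81)` this gives `g^[3^(n-4)] = id` on `3ℤ / 3^n`. At `z = 9` the same expansion
works modulo `9M` with `s ≡ 3 (mod 9)`, so the 3-adic valuation of `g^[3^j] 9 - 9` rises by
exactly one at each step; with `g 9 ≢ 9 (mod 243)` and the fact that `f` swaps `9` and `18`
modulo 27, the point 9 has minimal period exactly `2 · 3^(n-4)`.
-/

open Function Set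

def logistic {R : Type*} [CommRing R] (c x : R) : R := c * x * (x + 1)

theorem eq_mul_prime_pow_of_dvd {a p e P : ℕ} (hp : p.Prime) (hP : P ∣ a * p ^ e) (ha : a ∣ P)
    (hlow : ∀ i < e, ¬ P ∣ a * p ^ i) : P = a * p ^ e := by
  obtain ⟨Q, rfl⟩ := ha
  rcases Nat.eq_zero_or_pos a with rfl | ha
  · simp
  obtain ⟨i, hie, rfl⟩ := (Nat.dvd_prime_pow hp).1 (Nat.dvd_of_mul_dvd_mul_left ha hP)
  rcases hie.lt_or_eq with hie | rfl
  · exact absurd dvd_rfl (hlow i hie)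
  · rfl

theorem isFixedPt_of_mem_periodicPts_of_iterate_eqOn {α : Type*} {f : α → α} {s : Set α}
    {N : ℕ} {x : α} (hs : MapsTo f s s) (hN : ∀ a ∈ s, ∀ b ∈ s, f^[N] a = f^[N] b)
    (hx : x ∈ periodicPts f) (hxs : x ∈ s) : IsFixedPt f x := by
  obtain ⟨p, hp, hper⟩ := mem_periodicPts.1 hx
  obtain ⟨q, rfl⟩ : ∃ q, p = q + 1 := ⟨p - 1, by omega⟩
  have hx : (f^[N])^[q + 1] x = x := hper.iterate N
  have hfx : (f^[N])^[q + 1] (f x) = f x := hper.apply.iterate N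
  calc f x = (f^[N])^[q] (f^[N] (f x)) := by rw [← iterate_succ_apply, hfx]
    _ = (f^[N])^[q] (f^[N] x) := by rw [hN _ (hs hxs) _ hxs]
    _ = x := by rw [← iterate_succ_apply, hx]

section Taylor

variable {R : Type*} [CommRing R] {g g' : R → R} {m : R}

theorem exists_iterate_add_sub_mul (taylor : ∀ z d, d ^ 2 ∣ g (z + d) - g z - d * g' z)
    (hg : ∀ z, m ∣ z → m ∣ g z) (hg' : ∀ z, m ∣ z → m ∣ g' z - 1) {M z h : R}
    (hz : m ∣ z) (hM : m ∣ M) (hh : M ∣ h) (k : ℕ) :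
    ∃ u, m ∣ u - 1 ∧ M * m ∣ g^[k] (z + h) - g^[k] z - h * u := by
  induction k with
  | zero => exact ⟨1, by simp, by simp⟩
  | succ k ih =>
    obtain ⟨u, hu, t, ht⟩ := ih
    set y := g^[k] z
    have hy : m ∣ y := (show MapsTo g {z | m ∣ z} {z | m ∣ z} from hg).iterate k hz
    set d := h * u + M * m * t
    have hd : M ∣ d := dvd_add (hh.mul_right u) ((dvd_mul_right M m).mul_right t)
    have hstep : g^[k] (z + h) = y + d := by linear_combination ht
    refine ⟨u * g' y, ?_, ?_⟩
    · rw [show u * g' y - 1 = (u - 1) * g' y + (g' y - 1) by ring]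
      exact dvd_add (hu.mul_right _) (hg' y hy)
    · rw [iterate_succ_apply', iterate_succ_apply', hstep,
        show g (y + d) - g y - h * (u * g' y)
          = (g (y + d) - g y - d * g' y) + M * m * (t * g' y) by ring]
      have hd2 : M * m ∣ d ^ 2 := sq d ▸ mul_dvd_mul hd (hM.trans hd)
      exact dvd_add (hd2.trans (taylor y d)) (dvd_mul_right _ _)

theorem exists_iterate_three_mul_sub_mul (taylor : ∀ z d, d ^ 2 ∣ g (z + d) - g z - d * g' z)
    (hg : ∀ z, m ∣ z → m ∣ g z) (hg' : ∀ z, m ∣ z → m ∣ g' z - 1) {M z : R}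
    (hz : m ∣ z) (hM : m ∣ M) {k : ℕ} (hk : M ∣ g^[k] z - z) :
    ∃ s, m ∣ s - 3 ∧ M * m ∣ g^[3 * k] z - z - (g^[k] z - z) * s := by
  obtain ⟨u₁, hu₁, hd₁⟩ := exists_iterate_add_sub_mul taylor hg hg' hz hM hk k
  rw [add_sub_cancel] at hd₁
  have hk₂ : M ∣ g^[k] (g^[k] z) - z := by
    rw [show g^[k] (g^[k] z) - z = (g^[k] (g^[k] z) - g^[k] z - (g^[k] z - z) * u₁)
      + (g^[k] z - z) * (1 + u₁) by ring]
    exact dvd_add ((dvd_mul_right M m).trans hd₁) (hk.mul_right _)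
  obtain ⟨u₂, hu₂, hd₂⟩ := exists_iterate_add_sub_mul taylor hg hg' hz hM hk₂ k
  rw [add_sub_cancel] at hd₂
  refine ⟨1 + u₂ + u₁ * u₂, ?_, ?_⟩
  · rw [show 1 + u₂ + u₁ * u₂ - 3 = 2 * (u₂ - 1) + (u₁ - 1) * u₂ by ring]
    exact dvd_add (hu₂.mul_left 2) (hu₁.mul_right u₂)
  · rw [show 3 * k = k + (k + k) by ring, iterate_add_apply, iterate_add_apply]
    convert dvd_add hd₂ (hd₁.mul_left u₂) using 1
    ring

end Taylor

section CommRing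

variable {R S : Type*} [CommRing R] [CommRing S]

theorem semiconj_logistic (φ : R →+* S) (c : R) :
    Semiconj φ (logistic c) (logistic (φ c)) :=
  fun x ↦ by simp [logistic]

theorem dvd_logistic {m x : R} (c : R) (hx : m ∣ x) : m ∣ logistic c x :=
  (hx.mul_left c).mul_right _

theorem logistic_sub_logistic (c a b : R) :
    logistic c a - logistic c b = (a - b) * (c * (a + b + 1)) := by
  unfold logistic; ring

theorem mapsTo_logistic_three_dvd_sub_one {c : R} (hc : 3 ∣ c + 1) :
    MapsTo (logistic c) {x | 3 ∣ x - 1} {x | 3 ∣ x - 1} := by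
  rintro x ⟨s, hs⟩
  obtain ⟨r, hr⟩ := hc
  refine ⟨r * (9 * s ^ 2 + 9 * s + 2) - 3 * s ^ 2 - 3 * s - 1, ?_⟩
  rw [logistic, show c = 3 * r - 1 by linear_combination hr,
    show x = 3 * s + 1 by linear_combination hs]
  ring

theorem three_pow_dvd_iterate_logistic_sub {c a b : R} (hc : 3 ∣ c + 1) (ha : 3 ∣ a - 1)
    (hb : 3 ∣ b - 1) (k : ℕ) : 3 ^ k ∣ (logistic c)^[k] a - (logistic c)^[k] b := by
  induction k with
  | zero => simp
  | succ k ih =>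
    obtain ⟨u, hu⟩ := (mapsTo_logistic_three_dvd_sub_one hc).iterate k ha
    obtain ⟨v, hv⟩ := (mapsTo_logistic_three_dvd_sub_one hc).iterate k hb
    rw [iterate_succ_apply', iterate_succ_apply', logistic_sub_logistic, pow_succ]
    refine mul_dvd_mul ih (Dvd.dvd.mul_left ⟨u + v + 1, ?_⟩ c)
    linear_combination hu + hv

theorem isFixedPt_logistic_of_mem_periodicPts {N : ℕ} (hN : (3 : R) ^ N = 0) {c x : R}
    (hc : 3 ∣ c + 1) (hx : x ∈ periodicPts (logistic c)) (hx₁ : 3 ∣ x - 1) :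
    IsFixedPt (logistic c) x := by
  refine isFixedPt_of_mem_periodicPts_of_iterate_eqOn (N := N)
    (mapsTo_logistic_three_dvd_sub_one hc) (fun a ha b hb ↦ ?_) hx hx₁
  have := three_pow_dvd_iterate_logistic_sub hc ha hb N
  rwa [hN, zero_dvd_iff, sub_eq_zero] at this

-- `c² (2z + 1) (2 f(z) + 1)` is the derivative of `f ∘ f` at `z`, for `f = logistic c`.
theorem sq_dvd_logistic_iterate_two_add_sub (c z d : R) :
    d ^ 2 ∣ (logistic c)^[2] (z + d) - (logistic c)^[2] z
      - d * (c ^ 2 * (2 * z + 1) * (2 * logistic c z + 1)) :=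
  ⟨c ^ 2 * (2 * logistic c z + 1) + c * (c * (2 * z + 1 + d)) ^ 2, by
    simp only [iterate_succ, iterate_zero, comp_apply, id, logistic]; ring⟩

theorem dvd_logistic_deriv_sub_one {c m z : R} (hc : m ∣ c ^ 2 - 1) (hz : m ∣ z) :
    m ∣ c ^ 2 * (2 * z + 1) * (2 * logistic c z + 1) - 1 := by
  rw [show c ^ 2 * (2 * z + 1) * (2 * logistic c z + 1) - 1
      = (c ^ 2 - 1) * ((2 * z + 1) * (2 * logistic c z + 1)) + z * (4 * logistic c z + 2)
        + logistic c z * 2 by ring]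
  exact dvd_add (dvd_add (hc.mul_right _) (hz.mul_right _)) ((dvd_logistic c hz).mul_right _)

theorem exists_logistic_iterate_two_mul_three_mul_sub {c m M z : R} (hc : m ∣ c ^ 2 - 1)
    (hz : m ∣ z) (hM : m ∣ M) {k : ℕ} (hk : M ∣ (logistic c)^[2 * k] z - z) :
    ∃ s, m ∣ s - 3 ∧
      M * m ∣ (logistic c)^[2 * (3 * k)] z - z - ((logistic c)^[2 * k] z - z) * s := by
  simpa only [← iterate_mul] using exists_iterate_three_mul_sub_mul
    (sq_dvd_logistic_iterate_two_add_sub c) (fun _ hz ↦ dvd_logistic c (dvd_logistic c hz))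
    (fun _ hz ↦ dvd_logistic_deriv_sub_one hc hz) hz hM (by rwa [← iterate_mul])

theorem logistic_iterate_intCast (c z : ℤ) (k : ℕ) :
    (logistic (c : R))^[k] (z : R) = (((logistic c)^[k] z : ℤ) : R) :=
  ((semiconj_logistic (Int.castRingHom R) c).iterate_right k z).symm

end CommRing

theorem isPeriodicPt_logistic_intCast_iff {N : ℕ} {c z : ℤ} {k : ℕ} :
    IsPeriodicPt (logistic (c : ZMod N)) k (z : ZMod N) ↔ (N : ℤ) ∣ (logistic c)^[k] z - z := by
  rw [IsPeriodicPt, IsFixedPt, logistic_iterate_intCast, ZMod.intCast_eq_intCast_iff_dvd_sub,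
    dvd_sub_comm]

theorem nine_dvd_sq_sub_one {c : ℤ} (hc : 9 ∣ c + 1) : 9 ∣ c ^ 2 - 1 := by
  rw [show c ^ 2 - 1 = (c + 1) * (c - 1) by ring]
  exact hc.mul_right _

section CongrSeventeen

variable {c : ℤ}

-- In `ZMod 81`, `3 * (a - 17) = 0` says `a ≡ 17 (mod 27)`.
set_option maxRecDepth 10000 in
theorem eighty_one_dvd_logistic_iterate_two_sub (hc : c % 27 = 17) {z : ℤ} (hz : 3 ∣ z) :
    81 ∣ (logistic c)^[2] z - z := by
  have key : ∀ a x : ZMod 81, 3 * (a - 17) = 0 → (logistic a)^[2] (3 * x) = 3 * x := by decide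
  have hc81 : 3 * ((c : ZMod 81) - 17) = 0 := by
    have : ((3 * (c - 17) : ℤ) : ZMod 81) = 0 :=
      (ZMod.intCast_zmod_eq_zero_iff_dvd _ _).2 (by omega)
    exact_mod_cast this
  obtain ⟨w, rfl⟩ := hz
  exact_mod_cast isPeriodicPt_logistic_intCast_iff.1
    (by rw [Int.cast_mul, Int.cast_ofNat]; exact key _ (w : ZMod 81) hc81)

theorem pow_dvd_logistic_iterate_sub (hc : c % 27 = 17) {z : ℤ} (hz : 3 ∣ z) (j : ℕ) :
    3 ^ (j + 4) ∣ (logistic c)^[2 * 3 ^ j] z - z := by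
  induction j with
  | zero => simpa using eighty_one_dvd_logistic_iterate_two_sub hc hz
  | succ j ih =>
    obtain ⟨s, hs, hdvd⟩ := exists_logistic_iterate_two_mul_three_mul_sub
      ((dvd_pow_self 3 two_ne_zero).trans (nine_dvd_sq_sub_one (by omega))) hz
      (dvd_pow_self 3 (by omega)) ih
    rw [show 2 * 3 ^ (j + 1) = 2 * (3 * 3 ^ j) by ring,
      show (3 : ℤ) ^ (j + 1 + 4) = 3 ^ (j + 4) * 3 by ring]
    simpa using dvd_add hdvd (mul_dvd_mul ih (dvd_sub_self_right.1 hs))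

set_option maxRecDepth 10000 in
theorem not_pow_dvd_logistic_iterate_nine_sub (hc : c % 27 = 17) (j : ℕ) :
    ¬ 3 ^ (j + 5) ∣ (logistic c)^[2 * 3 ^ j] 9 - 9 := by
  induction j with
  | zero =>
    have key : ∀ a : ZMod 243, 9 * (a - 17) = 0 → (logistic a)^[2] 9 ≠ 9 := by decide
    have hc243 : 9 * ((c : ZMod 243) - 17) = 0 := by
      have : ((9 * (c - 17) : ℤ) : ZMod 243) = 0 :=
        (ZMod.intCast_zmod_eq_zero_iff_dvd _ _).2 (by omega)
      exact_mod_cast this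
    intro h
    have hper := isPeriodicPt_logistic_intCast_iff (N := 243) (k := 2) (z := 9).2
      (by exact_mod_cast h)
    rw [Int.cast_ofNat] at hper
    exact key _ hc243 hper
  | succ j ih =>
    intro h
    obtain ⟨s, ⟨t, ht⟩, hdvd⟩ := exists_logistic_iterate_two_mul_three_mul_sub
      (nine_dvd_sq_sub_one (by omega)) (dvd_refl 9) ⟨3 ^ (j + 2), by ring⟩
      (pow_dvd_logistic_iterate_sub hc (by norm_num) j)
    rw [show 2 * 3 ^ (j + 1) = 2 * (3 * 3 ^ j) by ring,
      show (3 : ℤ) ^ (j + 1 + 5) = 3 ^ (j + 4) * 9 by ring] at h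
    have h3 : 3 ^ (j + 4) * 9 ∣ ((logistic c)^[2 * 3 ^ j] 9 - 9) * s := by
      simpa using dvd_sub h hdvd
    rw [show s = 3 * (1 + 3 * t) by linear_combination ht,
      show (3 : ℤ) ^ (j + 4) * 9 = 3 ^ (j + 5) * 3 by ring,
      mul_left_comm, mul_comm 3, mul_dvd_mul_iff_right three_ne_zero] at h3
    have hcop : IsCoprime ((3 : ℤ) ^ (j + 5)) (1 + 3 * t) := IsCoprime.pow_left ⟨-t, 1, by ring⟩
    exact ih (hcop.dvd_of_dvd_mul_right h3)

theorem two_dvd_of_dvd_logistic_iterate_nine_sub (hc : c % 27 = 17) {k : ℕ}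
    (hk : 27 ∣ (logistic c)^[k] 9 - 9) : 2 ∣ k := by
  have h17 : (c : ZMod 27) = 17 := by rw [← ZMod.intCast_mod, Nat.cast_ofNat, hc]; rfl
  have hper := isPeriodicPt_logistic_intCast_iff (N := 27).2 (by exact_mod_cast hk)
  rw [h17, Int.cast_ofNat] at hper
  have hmin : minimalPeriod (logistic (17 : ZMod 27)) 9 = 2 :=
    minimalPeriod_eq_prime (show (logistic (17 : ZMod 27))^[2] 9 = 9 by decide)
      (show logistic (17 : ZMod 27) 9 ≠ 9 by decide)
  exact hmin ▸ hper.minimalPeriod_dvd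

end CongrSeventeen

section ZModThreePow

variable {c : ℤ} (e : ℕ)

theorem isPeriodicPt_logistic_zmod_of_three_dvd (hc : c % 27 = 17) {w : ℤ} (hw : 3 ∣ w) :
    IsPeriodicPt (logistic (c : ZMod (3 ^ (e + 4)))) (2 * 3 ^ e) (w : ZMod (3 ^ (e + 4))) :=
  isPeriodicPt_logistic_intCast_iff.2 (by exact_mod_cast pow_dvd_logistic_iterate_sub hc hw e)

theorem minimalPeriod_logistic_zmod_le (hc : c % 27 = 17) (x : ZMod (3 ^ (e + 4))) :
    minimalPeriod (logistic (c : ZMod (3 ^ (e + 4)))) x ≤ 2 * 3 ^ e := by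
  set f := logistic (c : ZMod (3 ^ (e + 4)))
  by_cases hx : x ∈ periodicPts f
  swap
  · rw [minimalPeriod_eq_zero_of_notMem_periodicPts hx]; exact Nat.zero_le _
  obtain ⟨z, rfl⟩ := ZMod.intCast_surjective x
  by_cases hz : 3 ∣ z - 1
  · have hfix : IsFixedPt f z := isFixedPt_logistic_of_mem_periodicPts (N := e + 4)
      (by exact_mod_cast ZMod.natCast_self (3 ^ (e + 4)))
      (by exact_mod_cast Int.cast_dvd_cast 3 (c + 1) (by omega)) hx
      (by exact_mod_cast Int.cast_dvd_cast 3 (z - 1) hz)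
    rw [minimalPeriod_eq_one_iff_isFixedPt.2 hfix]
    exact (by positivity : 0 < 2 * 3 ^ e)
  · have h3 : 3 ∣ logistic c z := by
      rcases (by omega : 3 ∣ z ∨ 3 ∣ z + 1) with h | h
      · exact dvd_logistic c h
      · exact h.mul_left _
    have hfz : f z = ((logistic c z : ℤ) : ZMod (3 ^ (e + 4))) := logistic_iterate_intCast c z 1
    rw [← minimalPeriod_apply hx, hfz]
    exact (isPeriodicPt_logistic_zmod_of_three_dvd e hc h3).minimalPeriod_le (by positivity)

theorem minimalPeriod_logistic_zmod_nine (hc : c % 27 = 17) :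
    minimalPeriod (logistic (c : ZMod (3 ^ (e + 4)))) ((9 : ℤ) : ZMod (3 ^ (e + 4)))
      = 2 * 3 ^ e := by
  set f := logistic (c : ZMod (3 ^ (e + 4)))
  have hdvd {k : ℕ} (h : IsPeriodicPt f k ((9 : ℤ) : ZMod (3 ^ (e + 4)))) :
      (3 : ℤ) ^ (e + 4) ∣ (logistic c)^[k] 9 - 9 := by
    exact_mod_cast isPeriodicPt_logistic_intCast_iff.1 h
  apply eq_mul_prime_pow_of_dvd Nat.prime_three
    (isPeriodicPt_logistic_zmod_of_three_dvd e hc (by norm_num)).minimalPeriod_dvd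
  · exact two_dvd_of_dvd_logistic_iterate_nine_sub hc
      ((pow_dvd_pow 3 (by omega : 3 ≤ e + 4)).trans (hdvd (isPeriodicPt_minimalPeriod f _)))
  · intro i hi hi_dvd
    exact not_pow_dvd_logistic_iterate_nine_sub hc i ((pow_dvd_pow 3 (by omega)).trans
      (hdvd ((isPeriodicPt_minimalPeriod f _).trans_dvd hi_dvd)))

end ZModThreePow

theorem logistic_maxPeriod_mu_seventeen_general (n : ℕ) (hn : 4 ≤ n) (μ : ℕ)
    (hμ27 : μ % 27 = 17) :
    Finset.univ.sup
        (fun x₀ : ZMod (3 ^ n) =>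
          Function.minimalPeriod
            (fun x : ZMod (3 ^ n) => (μ : ZMod (3 ^ n)) * x * (x + 1)) x₀) =
      2 * 3 ^ (n - 4) := by
  obtain ⟨e, rfl⟩ := Nat.exists_eq_add_of_le' hn
  have hc : (μ : ℤ) % 27 = 17 := by omega
  have hf : (fun x : ZMod (3 ^ (e + 4)) => (μ : ZMod (3 ^ (e + 4))) * x * (x + 1))
      = logistic ((μ : ℤ) : ZMod (3 ^ (e + 4))) := by
    rw [Int.cast_natCast]; rfl
  rw [hf, Nat.add_sub_cancel]
  refine le_antisymm (Finset.sup_le fun x _ ↦ minimalPeriod_logistic_zmod_le e hc x) ?_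
  exact minimalPeriod_logistic_zmod_nine e hc ▸ Finset.le_sup (Finset.mem_univ _)

/-- Corollary 1 (case `μ ≡ 17 mod 27`): for `n ≥ 4` and a positive integer `μ`
with `μ mod 27 = 17`, the maximum over all `x₀ ∈ ZMod (3^n)` of the minimal
period of `x₀` under `f(x) = μ·x·(x+1)` equals `2·3^{n−4}`. -/
theorem logistic_maxPeriod_mu_seventeen (n : ℕ) (hn : 4 ≤ n) (μ : ℕ) (hμ : 0 < μ)
    (hμ27 : μ % 27 = 17) :
    Finset.univ.sup
        (fun x₀ : ZMod (3 ^ n) =>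
          Function.minimalPeriod
            (fun x : ZMod (3 ^ n) => (μ : ZMod (3 ^ n)) * x * (x + 1)) x₀) =
      2 * 3 ^ (n - 4) :=
  logistic_maxPeriod_mu_seventeen_general n hn μ hμ27
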